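/- arXiv:1405.1768 — 2 statements merged into one kernel-verified Lean document; each statement's English description precedes it below -/
import Mathlib

section
/- For every k > 0 and every choice of sign σ ∈ {+1, −1}, the function x : ℝ → (ℤ → ℝ) given by x_n(t) = −ln[ (1 + exp(−2kn + 2σ sinh(k) t)) / (1 + exp(−2k(n−1) + 2σ sinh(k) t)) ] is twice differentiable in t and satisfies the Toda lattice equation ẍ_n = e^{x_{n−1} − x_n} − e^{x_n − x_{n+1}} for all n ∈ ℤ and all t ∈ ℝ. -/
/-!
Write `τ_n(t) = 1 + exp(-2kn + ct)` with `c = 2σ sinh k`, so that `x_n = log τ_{n-1} - log τ_n`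
and, with `L φ = log (1 + exp φ)` and `θ = -2kn + ct`, `x_n = L (θ + 2k) - L θ`.
Then `ẍ_n = c² (L'' (θ + 2k) - L'' θ)`, while the identity
`(1 + e^{θ+2k}) (1 + e^{θ-2k}) = (1 + e^θ)² + (2 sinh k)² e^θ` says that
`exp (x_n - x_{n+1}) = 1 + (2 sinh k)² L'' θ`. Since `c² = (2 sinh k)²`, the two sides of the
Toda equation agree.
-/

open Real

namespace TodaSoliton

noncomputable def logTau (φ : ℝ) : ℝ := log (1 + exp φ)

noncomputable def logTau' (φ : ℝ) : ℝ := exp φ / (1 + exp φ)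

noncomputable def logTau'' (φ : ℝ) : ℝ := exp φ / (1 + exp φ) ^ 2

lemma one_add_exp_pos (φ : ℝ) : 0 < 1 + exp φ := by positivity

lemma hasDerivAt_logTau (φ : ℝ) : HasDerivAt logTau (logTau' φ) φ :=
  ((hasDerivAt_exp φ).const_add 1).log (one_add_exp_pos φ).ne'

lemma hasDerivAt_logTau' (φ : ℝ) : HasDerivAt logTau' (logTau'' φ) φ := by
  rw [logTau'']
  exact ((hasDerivAt_exp φ).div ((hasDerivAt_exp φ).const_add 1) (one_add_exp_pos φ).ne').congr_deriv
    (by ring)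

lemma exp_second_difference_logTau (k φ : ℝ) :
    exp (logTau (φ + 2 * k) - 2 * logTau φ + logTau (φ - 2 * k)) =
      1 + (2 * sinh k) ^ 2 * logTau'' φ := by
  have hτ : logTau (φ + 2 * k) - 2 * logTau φ + logTau (φ - 2 * k) =
      log ((1 + exp (φ + 2 * k)) * (1 + exp (φ - 2 * k)) / (1 + exp φ) ^ 2) := by
    rw [log_div (by positivity) (by positivity), log_mul (by positivity) (by positivity), log_pow,
      logTau, logTau, logTau]
    push_cast
    ring
  have hk : exp (2 * k) = exp k ^ 2 := by rw [← exp_nat_mul]; norm_num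
  rw [hτ, exp_log (by positivity), exp_add, exp_sub, hk, sinh_eq, exp_neg, logTau'']
  have := exp_pos k
  field_simp
  ring

lemma hasDerivAt_comp_affine {f f' : ℝ → ℝ} (hf : ∀ φ, HasDerivAt f (f' φ) φ) (a c t : ℝ) :
    HasDerivAt (fun t => f (a + c * t)) (c * f' (a + c * t)) t := by
  have := (hf (a + c * t)).comp t ((hasDerivAt_id t |>.const_mul c).const_add a)
  simpa [Function.comp_def, mul_comm] using this

noncomputable def soliton (k c n t : ℝ) : ℝ :=
  logTau (-2 * k * (n - 1) + c * t) - logTau (-2 * k * n + c * t)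

lemma soliton_eq_neg_log_div (k c n t : ℝ) :
    soliton k c n t =
      -log ((1 + exp (-2 * k * n + c * t)) / (1 + exp (-2 * k * (n - 1) + c * t))) := by
  rw [log_div (one_add_exp_pos _).ne' (one_add_exp_pos _).ne', soliton, logTau, logTau]
  ring

lemma hasDerivAt_soliton (k c n t : ℝ) :
    HasDerivAt (soliton k c n)
      (c * logTau' (-2 * k * (n - 1) + c * t) - c * logTau' (-2 * k * n + c * t)) t :=
  (hasDerivAt_comp_affine hasDerivAt_logTau _ c t).sub (hasDerivAt_comp_affine hasDerivAt_logTau _ c t)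

lemma deriv_soliton (k c n : ℝ) :
    deriv (soliton k c n) =
      fun t => c * logTau' (-2 * k * (n - 1) + c * t) - c * logTau' (-2 * k * n + c * t) :=
  funext fun t => (hasDerivAt_soliton k c n t).deriv

lemma hasDerivAt_deriv_soliton (k c n t : ℝ) :
    HasDerivAt (deriv (soliton k c n))
      (c ^ 2 * logTau'' (-2 * k * (n - 1) + c * t) - c ^ 2 * logTau'' (-2 * k * n + c * t)) t := by
  rw [deriv_soliton]
  exact (((hasDerivAt_comp_affine hasDerivAt_logTau' _ c t).const_mul c).sub
    ((hasDerivAt_comp_affine hasDerivAt_logTau' _ c t).const_mul c)).congr_deriv (by ring)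

lemma exp_soliton_sub_soliton_add_one (k c n t : ℝ) :
    exp (soliton k c n t - soliton k c (n + 1) t) =
      1 + (2 * sinh k) ^ 2 * logTau'' (-2 * k * n + c * t) := by
  rw [← exp_second_difference_logTau, soliton, soliton, add_sub_cancel_right,
    show -2 * k * (n - 1) + c * t = -2 * k * n + c * t + 2 * k by ring,
    show -2 * k * (n + 1) + c * t = -2 * k * n + c * t - 2 * k by ring]
  congr 1
  ring

end TodaSoliton

open TodaSoliton

theorem toda_one_soliton_general
    (k : ℝ) (σ : ℝ) (hσ : σ = 1 ∨ σ = -1)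
    (x : ℝ → ℤ → ℝ)
    (hx : ∀ (t : ℝ) (n : ℤ),
      x t n = -Real.log
        ((1 + Real.exp (-2 * k * (n : ℝ) + 2 * σ * Real.sinh k * t)) /
         (1 + Real.exp (-2 * k * ((n : ℝ) - 1) + 2 * σ * Real.sinh k * t)))) :
    ∀ n : ℤ,
      Differentiable ℝ (fun t => x t n) ∧
      Differentiable ℝ (deriv (fun t => x t n)) ∧
      ∀ t : ℝ,
        deriv (deriv (fun s => x s n)) t =
          Real.exp (x t (n - 1) - x t n) - Real.exp (x t n - x t (n + 1)) := by
  intro n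
  set c := 2 * σ * sinh k
  have hc : c ^ 2 = (2 * sinh k) ^ 2 := by rcases hσ with rfl | rfl <;> ring
  have hxt : ∀ t (m : ℤ), x t m = soliton k c m t := fun t m => by
    rw [hx, soliton_eq_neg_log_div]
  have hxn : (fun t => x t n) = soliton k c n := funext fun t => hxt t n
  refine ⟨?_, ?_, fun t => ?_⟩
  · rw [hxn]
    exact fun t => (hasDerivAt_soliton k c n t).differentiableAt
  · rw [hxn]
    exact fun t => (hasDerivAt_deriv_soliton k c n t).differentiableAt
  · have hleft := exp_soliton_sub_soliton_add_one k c (n - 1) t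
    have hright := exp_soliton_sub_soliton_add_one k c n t
    rw [sub_add_cancel] at hleft
    rw [hxn, (hasDerivAt_deriv_soliton k c n t).deriv, hxt t (n - 1), hxt t n, hxt t (n + 1)]
    push_cast
    rw [hleft, hright, hc]
    ring

/-- For every `k > 0` and sign `σ ∈ {+1, −1}`, the function
`x_n(t) = −ln[(1 + exp(−2kn + 2σ sinh(k) t)) / (1 + exp(−2k(n−1) + 2σ sinh(k) t))]`
is twice differentiable in `t` and solves the Toda lattice
`ẍ_n = e^{x_{n−1} − x_n} − e^{x_n − x_{n+1}}`. -/
theorem toda_one_soliton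
    (k : ℝ) (hk : 0 < k) (σ : ℝ) (hσ : σ = 1 ∨ σ = -1)
    (x : ℝ → ℤ → ℝ)
    (hx : ∀ (t : ℝ) (n : ℤ),
      x t n = -Real.log
        ((1 + Real.exp (-2 * k * (n : ℝ) + 2 * σ * Real.sinh k * t)) /
         (1 + Real.exp (-2 * k * ((n : ℝ) - 1) + 2 * σ * Real.sinh k * t)))) :
    ∀ n : ℤ,
      Differentiable ℝ (fun t => x t n) ∧
      Differentiable ℝ (deriv (fun t => x t n)) ∧
      ∀ t : ℝ,
        deriv (deriv (fun s => x s n)) t =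
          Real.exp (x t (n - 1) - x t n) - Real.exp (x t n - x t (n + 1)) :=
  toda_one_soliton_general k σ hσ x hx
end

section
/- Let k₁, k₂ > 0 with k₁ ≠ k₂, let β₁, β₂ ∈ ℝ satisfy β_i² = sinh² k_i for i = 1, 2, and let A₁, A₂ > 0 satisfy A₁A₂ = [ (β₁+β₂)² − sinh²(k₁+k₂) ] / [ sinh²(k₁−k₂) − (β₁−β₂)² ] (assuming the right-hand side is positive). Define S_n(t) = ln{ 1 + A₁ exp[2(k₁ n − β₁ t)] + A₂ exp[2(k₂ n − β₂ t)] + exp[2(k₁+k₂) n − 2(β₁+β₂) t] } and x_n(t) = S_{n−1}(t) − S_n(t). Then x satisfies the Toda lattice equation ẍ_n = e^{x_{n−1} − x_n} − e^{x_n − x_{n+1}} for all n ∈ ℤ and t ∈ ℝ. -/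
/-!
Hirota's substitution: if `τ_n > 0` satisfies the bilinear equation
`τ_n'' τ_n - (τ_n')² = τ_{n-1} τ_{n+1} - τ_n²`, then `(log τ_n)'' = τ_{n-1} τ_{n+1} / τ_n² - 1`,
and `x_n = log τ_{n-1} - log τ_n` solves the Toda lattice because
`e^{x_n - x_{n+1}} = τ_{n-1} τ_{n+1} / τ_n²`. For `τ = 1 + A₁e^{θ₁} + A₂e^{θ₂} + e^{θ₁+θ₂}`
both sides of the bilinear equation are sums over pairs of terms of `τ`; the pairs match
termwise by `β_i² = sinh² k_i`, except the two pairs producing `e^{θ₁+θ₂}`, which balance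
exactly when `A₁A₂` has the stated value.
-/
open Real

theorem toda_of_hirota {τ τ' τ'' x : ℤ → ℝ → ℝ} (hpos : ∀ n t, 0 < τ n t)
    (hτ : ∀ n t, HasDerivAt (τ n) (τ' n t) t) (hτ' : ∀ n t, HasDerivAt (τ' n) (τ'' n t) t)
    (hirota : ∀ n t, τ'' n t * τ n t - τ' n t ^ 2 = τ (n - 1) t * τ (n + 1) t - τ n t ^ 2)
    (hx : ∀ n t, x n t = log (τ (n - 1) t) - log (τ n t)) (n : ℤ) (t : ℝ) :
    deriv (deriv (x n)) t = exp (x (n - 1) t - x n t) - exp (x n t - x (n + 1) t) := by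
  have hdx : deriv (x n) = fun s => τ' (n - 1) s / τ (n - 1) s - τ' n s / τ n s := by
    funext s
    rw [show x n = fun s => log (τ (n - 1) s) - log (τ n s) from funext (hx n)]
    exact (((hτ _ s).log (hpos _ s).ne').sub ((hτ n s).log (hpos n s).ne')).deriv
  have hlog'' : ∀ m, HasDerivAt (fun s => τ' m s / τ m s)
      (τ (m - 1) t * τ (m + 1) t / τ m t ^ 2 - 1) t := by
    intro m
    have hτm := (hpos m t).ne'
    refine ((hτ' m t).div (hτ m t) hτm).congr_deriv ?_
    rw [← sq, hirota]
    field_simp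
  have hexp : ∀ m, exp (x m t - x (m + 1) t) = τ (m - 1) t * τ (m + 1) t / τ m t ^ 2 := by
    intro m
    rw [hx, hx, add_sub_cancel_right, exp_sub, exp_sub, exp_sub, exp_log (hpos _ t),
      exp_log (hpos _ t), exp_log (hpos _ t)]
    field_simp
  have hexp_pred := hexp (n - 1)
  rw [sub_add_cancel] at hexp_pred
  have hdx' : HasDerivAt (fun s => τ' (n - 1) s / τ (n - 1) s - τ' n s / τ n s) _ t :=
    (hlog'' (n - 1)).sub (hlog'' n)
  rw [hdx, hdx'.deriv, hexp_pred, hexp n, sub_add_cancel]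
  ring

theorem sinh_sq_eq_exp (x : ℝ) : sinh x ^ 2 = (exp (2 * x) + (exp (2 * x))⁻¹ - 2) / 4 := by
  rw [sinh_eq, exp_neg, two_mul, exp_add]
  field_simp
  ring

noncomputable def expPhase (k β : ℝ) (n : ℤ) (t : ℝ) : ℝ := exp (2 * (k * n - β * t))

section expPhase

variable (k β : ℝ) (n : ℤ) (t : ℝ)

theorem expPhase_pos : 0 < expPhase k β n t := exp_pos _

theorem hasDerivAt_expPhase : HasDerivAt (expPhase k β n) (-2 * β * expPhase k β n t) t := by
  have h : HasDerivAt (fun s : ℝ => 2 * (k * n - β * s)) (-2 * β) t := by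
    simpa using (((hasDerivAt_id t).const_mul β).const_sub (k * n)).const_mul 2
  exact h.exp.congr_deriv (by rw [expPhase]; ring)

theorem expPhase_add (k' β' : ℝ) :
    expPhase (k + k') (β + β') n t = expPhase k β n t * expPhase k' β' n t := by
  rw [expPhase, expPhase, expPhase, ← exp_add]
  ring_nf

theorem expPhase_succ : expPhase k β (n + 1) t = exp (2 * k) * expPhase k β n t := by
  rw [expPhase, expPhase, ← exp_add]
  push_cast
  ring_nf

theorem expPhase_pred : expPhase k β (n - 1) t = (exp (2 * k))⁻¹ * expPhase k β n t := by
  rw [expPhase, expPhase, ← exp_neg, ← exp_add]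
  push_cast
  ring_nf

end expPhase

section twoSoliton

variable (k₁ k₂ β₁ β₂ A₁ A₂ : ℝ)

/-- The `m`-th time derivative of the two-soliton τ-function
`1 + A₁ e^{θ₁} + A₂ e^{θ₂} + e^{θ₁ + θ₂}`, `θ_i = 2 (k_i n - β_i t)`. -/
noncomputable def twoSolitonTau (m : ℕ) (n : ℤ) (t : ℝ) : ℝ :=
  0 ^ m + (-2 * β₁) ^ m * A₁ * expPhase k₁ β₁ n t + (-2 * β₂) ^ m * A₂ * expPhase k₂ β₂ n t
    + (-2 * (β₁ + β₂)) ^ m * expPhase (k₁ + k₂) (β₁ + β₂) n t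

theorem twoSolitonTau_pos (hA₁ : 0 < A₁) (hA₂ : 0 < A₂) (n : ℤ) (t : ℝ) :
    0 < twoSolitonTau k₁ k₂ β₁ β₂ A₁ A₂ 0 n t := by
  have := expPhase_pos k₁ β₁ n t
  have := expPhase_pos k₂ β₂ n t
  have := expPhase_pos (k₁ + k₂) (β₁ + β₂) n t
  simp only [twoSolitonTau, pow_zero, one_mul]
  positivity

theorem hasDerivAt_twoSolitonTau (m : ℕ) (n : ℤ) (t : ℝ) :
    HasDerivAt (twoSolitonTau k₁ k₂ β₁ β₂ A₁ A₂ m n)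
      (twoSolitonTau k₁ k₂ β₁ β₂ A₁ A₂ (m + 1) n t) t := by
  have h := ((((hasDerivAt_expPhase k₁ β₁ n t).const_mul ((-2 * β₁) ^ m * A₁)).const_add
    ((0 : ℝ) ^ m)).add ((hasDerivAt_expPhase k₂ β₂ n t).const_mul ((-2 * β₂) ^ m * A₂))).add
    ((hasDerivAt_expPhase (k₁ + k₂) (β₁ + β₂) n t).const_mul ((-2 * (β₁ + β₂)) ^ m))
  refine h.congr_deriv ?_
  simp only [twoSolitonTau, pow_succ, mul_zero]
  ring

theorem twoSolitonTau_hirota (hβ₁ : β₁ ^ 2 = sinh k₁ ^ 2) (hβ₂ : β₂ ^ 2 = sinh k₂ ^ 2)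
    (hA : A₁ * A₂ * (sinh (k₁ - k₂) ^ 2 - (β₁ - β₂) ^ 2) = (β₁ + β₂) ^ 2 - sinh (k₁ + k₂) ^ 2)
    (n : ℤ) (t : ℝ) :
    twoSolitonTau k₁ k₂ β₁ β₂ A₁ A₂ 2 n t * twoSolitonTau k₁ k₂ β₁ β₂ A₁ A₂ 0 n t
        - twoSolitonTau k₁ k₂ β₁ β₂ A₁ A₂ 1 n t ^ 2
      = twoSolitonTau k₁ k₂ β₁ β₂ A₁ A₂ 0 (n - 1) t * twoSolitonTau k₁ k₂ β₁ β₂ A₁ A₂ 0 (n + 1) t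
        - twoSolitonTau k₁ k₂ β₁ β₂ A₁ A₂ 0 n t ^ 2 := by
  rw [sinh_sq_eq_exp (k₁ - k₂), sinh_sq_eq_exp (k₁ + k₂), mul_sub 2, mul_add 2, exp_add,
    exp_sub] at hA
  rw [sinh_sq_eq_exp] at hβ₁ hβ₂
  simp only [twoSolitonTau, expPhase_succ, expPhase_pred, expPhase_add, mul_add 2 k₁, exp_add]
  set u := exp (2 * k₁)
  set v := exp (2 * k₂)
  set P := expPhase k₁ β₁ n t
  set Q := expPhase k₂ β₂ n t
  have hu : u ≠ 0 := (exp_pos _).ne'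
  have hv : v ≠ 0 := (exp_pos _).ne'
  linear_combination (norm := skip) (4 * (A₁ * P + A₂ * P * Q ^ 2)) * hβ₁
    + (4 * (A₂ * Q + A₁ * P ^ 2 * Q)) * hβ₂ - 4 * P * Q * hA
  field_simp
  ring

end twoSoliton

theorem toda_two_soliton_exponential_general
    (k₁ k₂ : ℝ)
    (β₁ β₂ : ℝ) (hβ₁ : β₁ ^ 2 = Real.sinh k₁ ^ 2) (hβ₂ : β₂ ^ 2 = Real.sinh k₂ ^ 2)
    (A₁ A₂ : ℝ) (hA₁ : 0 < A₁) (hA₂ : 0 < A₂)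
    (hratio : 0 < ((β₁ + β₂) ^ 2 - Real.sinh (k₁ + k₂) ^ 2) /
        (Real.sinh (k₁ - k₂) ^ 2 - (β₁ - β₂) ^ 2))
    (hA : A₁ * A₂ = ((β₁ + β₂) ^ 2 - Real.sinh (k₁ + k₂) ^ 2) /
        (Real.sinh (k₁ - k₂) ^ 2 - (β₁ - β₂) ^ 2))
    (S : ℤ → ℝ → ℝ)
    (hS : ∀ (n : ℤ) (t : ℝ),
      S n t = Real.log
        (1 + A₁ * Real.exp (2 * (k₁ * (n : ℝ) - β₁ * t))
           + A₂ * Real.exp (2 * (k₂ * (n : ℝ) - β₂ * t))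
           + Real.exp (2 * (k₁ + k₂) * (n : ℝ) - 2 * (β₁ + β₂) * t)))
    (x : ℤ → ℝ → ℝ)
    (hx : ∀ (n : ℤ) (t : ℝ), x n t = S (n - 1) t - S n t) :
    ∀ (n : ℤ) (t : ℝ),
      deriv (deriv (x n)) t =
        Real.exp (x (n - 1) t - x n t) - Real.exp (x n t - x (n + 1) t) := by
  have hD : Real.sinh (k₁ - k₂) ^ 2 - (β₁ - β₂) ^ 2 ≠ 0 := by
    rintro hD
    rw [hD, div_zero] at hratio
    exact hratio.false
  have hS_tau : ∀ n t, S n t = log (twoSolitonTau k₁ k₂ β₁ β₂ A₁ A₂ 0 n t) := by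
    intro n t
    rw [hS, twoSolitonTau, expPhase, expPhase, expPhase]
    ring_nf
  exact toda_of_hirota (twoSolitonTau_pos k₁ k₂ β₁ β₂ A₁ A₂ hA₁ hA₂)
    (hasDerivAt_twoSolitonTau k₁ k₂ β₁ β₂ A₁ A₂ 0) (hasDerivAt_twoSolitonTau k₁ k₂ β₁ β₂ A₁ A₂ 1)
    (twoSolitonTau_hirota k₁ k₂ β₁ β₂ A₁ A₂ hβ₁ hβ₂ ((eq_div_iff hD).mp hA))
    (fun n t => by rw [hx, hS_tau, hS_tau])

/-- The Toda two-soliton in exponential form,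
`x_n = S_{n−1} − S_n` with
`S_n(t) = ln{1 + A₁e^{2(k₁n−β₁t)} + A₂e^{2(k₂n−β₂t)} + e^{2(k₁+k₂)n − 2(β₁+β₂)t}}`,
`β_i² = sinh²k_i` and `A₁A₂ = [(β₁+β₂)² − sinh²(k₁+k₂)]/[sinh²(k₁−k₂) − (β₁−β₂)²]`,
solves the Toda lattice `ẍ_n = e^{x_{n−1} − x_n} − e^{x_n − x_{n+1}}`. -/
theorem toda_two_soliton_exponential
    (k₁ k₂ : ℝ) (hk₁ : 0 < k₁) (hk₂ : 0 < k₂) (hne : k₁ ≠ k₂)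
    (β₁ β₂ : ℝ) (hβ₁ : β₁ ^ 2 = Real.sinh k₁ ^ 2) (hβ₂ : β₂ ^ 2 = Real.sinh k₂ ^ 2)
    (A₁ A₂ : ℝ) (hA₁ : 0 < A₁) (hA₂ : 0 < A₂)
    (hratio : 0 < ((β₁ + β₂) ^ 2 - Real.sinh (k₁ + k₂) ^ 2) /
        (Real.sinh (k₁ - k₂) ^ 2 - (β₁ - β₂) ^ 2))
    (hA : A₁ * A₂ = ((β₁ + β₂) ^ 2 - Real.sinh (k₁ + k₂) ^ 2) /
        (Real.sinh (k₁ - k₂) ^ 2 - (β₁ - β₂) ^ 2))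
    (S : ℤ → ℝ → ℝ)
    (hS : ∀ (n : ℤ) (t : ℝ),
      S n t = Real.log
        (1 + A₁ * Real.exp (2 * (k₁ * (n : ℝ) - β₁ * t))
           + A₂ * Real.exp (2 * (k₂ * (n : ℝ) - β₂ * t))
           + Real.exp (2 * (k₁ + k₂) * (n : ℝ) - 2 * (β₁ + β₂) * t)))
    (x : ℤ → ℝ → ℝ)
    (hx : ∀ (n : ℤ) (t : ℝ), x n t = S (n - 1) t - S n t) :
    ∀ (n : ℤ) (t : ℝ),
      deriv (deriv (x n)) t =
        Real.exp (x (n - 1) t - x n t) - Real.exp (x n t - x (n + 1) t) :=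
  toda_two_soliton_exponential_general k₁ k₂ β₁ β₂ hβ₁ hβ₂ A₁ A₂ hA₁ hA₂ hratio hA S hS x hx
end
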